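/- arXiv:1704.00163 — 8 statements merged into one kernel-verified Lean document; each statement's English description precedes it below -/
import Mathlib

section
/- With the optimal allocations $t_k^* = \sqrt{\alpha_k L_k/R_k} / \sum_j \sqrt{\alpha_j L_j/R_j}$ and $V_k^* = V^c \sqrt{\alpha_k L_k} / \sum_j \sqrt{\alpha_j L_j}$, the minimum weighted-sum delay $\sum_k \alpha_k (L_k/(t_k^* R_k) + L_k/V_k^*)$ equals $\sum_{i=1}^K \sum_{j=1}^K \sqrt{\alpha_i \alpha_j L_i L_j} \big( 1/\sqrt{R_i R_j} + 1/V^c \big)$. -/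
open Finset

theorem edge_cloud_compression_min_delay
    (K : ℕ) (hK : 1 ≤ K)
    (α L R : Fin K → ℝ) (Vc : ℝ)
    (hα : ∀ k, 0 < α k) (hL : ∀ k, 0 < L k) (hR : ∀ k, 0 < R k)
    (hVc : 0 < Vc)
    (tstar Vstar : Fin K → ℝ)
    (htstar : ∀ k, tstar k =
      Real.sqrt (α k * L k / R k) / ∑ j, Real.sqrt (α j * L j / R j))
    (hVstar : ∀ k, Vstar k =
      Vc * Real.sqrt (α k * L k) / ∑ j, Real.sqrt (α j * L j)) :
    ∑ k, α k * (L k / (tstar k * R k) + L k / Vstar k) =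
      ∑ i, ∑ j, Real.sqrt (α i * α j * L i * L j) *
        (1 / Real.sqrt (R i * R j) + 1 / Vc) := by
  set a : Fin K → ℝ := fun k => Real.sqrt (α k * L k / R k) with ha
  set b : Fin K → ℝ := fun k => Real.sqrt (α k * L k) with hb
  have : Nonempty (Fin K) := Fin.pos_iff_nonempty.mp hK
  have hne : (Finset.univ : Finset (Fin K)).Nonempty := Finset.univ_nonempty
  have hapos : ∀ k, 0 < a k := fun k =>
    Real.sqrt_pos.mpr (div_pos (mul_pos (hα k) (hL k)) (hR k))
  have hbpos : ∀ k, 0 < b k := fun k =>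
    Real.sqrt_pos.mpr (mul_pos (hα k) (hL k))
  have hS1pos : 0 < ∑ j, a j := Finset.sum_pos (fun j _ => hapos j) hne
  have hS2pos : 0 < ∑ j, b j := Finset.sum_pos (fun j _ => hbpos j) hne
  have hasq : ∀ k, a k * a k = α k * L k / R k := fun k =>
    Real.mul_self_sqrt (le_of_lt (div_pos (mul_pos (hα k) (hL k)) (hR k)))
  have hbsq : ∀ k, b k * b k = α k * L k := fun k =>
    Real.mul_self_sqrt (le_of_lt (mul_pos (hα k) (hL k)))
  have hab : ∀ k, a k = b k / Real.sqrt (R k) := fun k =>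
    Real.sqrt_div (le_of_lt (mul_pos (hα k) (hL k))) _
  have key : ∀ k, α k * (L k / (tstar k * R k) + L k / Vstar k)
      = a k * (∑ j, a j) + b k * (∑ j, b j) / Vc := by
    intro k
    rw [htstar k, hVstar k]
    have hak : a k ≠ 0 := ne_of_gt (hapos k)
    have hbk : b k ≠ 0 := ne_of_gt (hbpos k)
    have hRk : R k ≠ 0 := ne_of_gt (hR k)
    have hVc' : Vc ≠ 0 := ne_of_gt hVc
    have h1 : α k * (L k / (a k / (∑ j, a j) * R k))
        = a k * (∑ j, a j) := by
      have h := hasq k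
      field_simp at h ⊢
      nlinarith [h]
    have h2 : α k * (L k / (Vc * b k / (∑ j, b j)))
        = b k * (∑ j, b j) / Vc := by
      have h := hbsq k
      field_simp
      nlinarith [h, hS2pos, hVc, mul_pos hS2pos hVc]
    calc α k * (L k / (a k / (∑ j, a j) * R k) + L k / (Vc * b k / (∑ j, b j)))
        = α k * (L k / (a k / (∑ j, a j) * R k))
          + α k * (L k / (Vc * b k / (∑ j, b j))) := by ring
      _ = a k * (∑ j, a j) + b k * (∑ j, b j) / Vc := by rw [h1, h2]
  have rhs : ∀ i j : Fin K, Real.sqrt (α i * α j * L i * L j) *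
      (1 / Real.sqrt (R i * R j) + 1 / Vc) = a i * a j + b i * b j / Vc := by
    intro i j
    have hbb : Real.sqrt (α i * α j * L i * L j) = b i * b j := by
      rw [show α i * α j * L i * L j = (α i * L i) * (α j * L j) by ring,
        Real.sqrt_mul (le_of_lt (mul_pos (hα i) (hL i)))]
    have hRR : Real.sqrt (R i * R j) = Real.sqrt (R i) * Real.sqrt (R j) :=
      Real.sqrt_mul (le_of_lt (hR i)) _
    rw [hbb, hRR, hab i, hab j]
    have hRi : Real.sqrt (R i) ≠ 0 := ne_of_gt (Real.sqrt_pos.mpr (hR i))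
    have hRj : Real.sqrt (R j) ≠ 0 := ne_of_gt (Real.sqrt_pos.mpr (hR j))
    field_simp
  calc ∑ k, α k * (L k / (tstar k * R k) + L k / Vstar k)
      = ∑ k, (a k * (∑ j, a j) + b k * (∑ j, b j) / Vc) := by
        exact Finset.sum_congr rfl fun k _ => key k
    _ = ∑ i, ∑ j, (a i * a j + b i * b j / Vc) := by
        refine Finset.sum_congr rfl fun i _ => ?_
        rw [Finset.sum_add_distrib, ← Finset.mul_sum, ← Finset.sum_div,
          ← Finset.mul_sum]
    _ = ∑ i, ∑ j, Real.sqrt (α i * α j * L i * L j) *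
        (1 / Real.sqrt (R i * R j) + 1 / Vc) := by
        exact Finset.sum_congr rfl fun i _ =>
          Finset.sum_congr rfl fun j _ => (rhs i j).symm
end

section
/- Fix positive reals $L, V^d, V^c, r$ (with $r = t R$ the communication capacity) and $\beta \in (0,1)$. Define for $\lambda \in [0,1]$: $D(\lambda) = \max\{\lambda L/V^d + \beta\lambda L/r,\ (1-\lambda)L/r + (1-\lambda)L/V^c\}$ if $\lambda \ge V^d/(V^d + r)$, and $D(\lambda) = (1-\lambda)L/r + \max\{\beta\lambda L/r,\ (1-\lambda)L/V^c\}$ if $\lambda < V^d/(V^d + r)$. If $r \ge \sqrt{\beta V^d V^c}$, then $D$ attains its minimum over $[0,1]$ at $\lambda^* = V^d(r + V^c)/(V^d V^c (1+\beta) + r(V^d + V^c))$. -/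
/-! The first branch of `D` is the larger of an increasing cost (local compression, then
transmission of the compressed part) and a decreasing one (raw transmission, then cloud
compression); the second branch also dominates the decreasing cost. `λ*` is where the two
costs balance, and `r ≥ √(β V^d V^c)` is exactly what puts `λ*` into the first branch, so no
`λ` can beat it: to its left the decreasing cost, to its right the increasing cost is larger. -/

open Set

theorem isMinOn_of_monotone_of_antitone_of_eq {α β : Type*} [LinearOrder α] [Preorder β]
    {f g D : α → β} {a : α}
    (hf : Monotone f) (hg : Antitone g) (hfa : f a = g a) (hDa : D a = g a)
    (hleft : ∀ l ≤ a, g l ≤ D l) (hright : ∀ l, a < l → f l ≤ D l) :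
    IsMinOn D univ a := by
  intro l _
  rw [mem_ofPred_eq, hDa]
  rcases le_or_gt l a with hla | hal
  · exact (hg hla).trans (hleft l hla)
  · exact hfa ▸ (hf hal.le).trans (hright l hal)

section OptimalSplit

variable {L Vd Vc r β : ℝ}

theorem optimalSplit_mem_Icc (hVd : 0 < Vd) (hVc : 0 < Vc) (hr : 0 < r) (hβ : 0 ≤ β) :
    Vd * (r + Vc) / (Vd * Vc * (1 + β) + r * (Vd + Vc)) ∈ Icc (0 : ℝ) 1 := by
  have hden : 0 < Vd * Vc * (1 + β) + r * (Vd + Vc) := by positivity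
  refine ⟨by positivity, ?_⟩
  rw [div_le_one hden]
  nlinarith [mul_nonneg (mul_nonneg hβ hVd.le) hVc.le, mul_pos hr hVc]

theorem threshold_le_optimalSplit (hVd : 0 < Vd) (hVc : 0 < Vc) (hr : 0 < r) (hβ : 0 ≤ β)
    (hcomm : β * Vd * Vc ≤ r ^ 2) :
    Vd / (Vd + r) ≤ Vd * (r + Vc) / (Vd * Vc * (1 + β) + r * (Vd + Vc)) := by
  rw [div_le_div_iff₀ (by positivity) (by positivity)]
  nlinarith

theorem optimalSplit_balance (hVd : 0 < Vd) (hVc : 0 < Vc) (hr : 0 < r) (hβ : 0 ≤ β) :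
    let lam := Vd * (r + Vc) / (Vd * Vc * (1 + β) + r * (Vd + Vc))
    lam * L / Vd + β * lam * L / r = (1 - lam) * L / r + (1 - lam) * L / Vc := by
  have hden : 0 < Vd * Vc * (1 + β) + r * (Vd + Vc) := by positivity
  field_simp
  ring

end OptimalSplit

theorem optimal_segmentation_comm_dominant_general
    (L Vd Vc r β : ℝ)
    (hL : 0 < L) (hVd : 0 < Vd) (hVc : 0 < Vc) (hr : 0 < r)
    (hβ0 : 0 < β)
    (D : ℝ → ℝ)
    (hD : ∀ lam : ℝ, D lam =
      if Vd / (Vd + r) ≤ lam then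
        max (lam * L / Vd + β * lam * L / r)
            ((1 - lam) * L / r + (1 - lam) * L / Vc)
      else
        (1 - lam) * L / r + max (β * lam * L / r) ((1 - lam) * L / Vc))
    (hcase : Real.sqrt (β * Vd * Vc) ≤ r)
    (lamstar : ℝ)
    (hlam : lamstar = Vd * (r + Vc) / (Vd * Vc * (1 + β) + r * (Vd + Vc))) :
    lamstar ∈ Set.Icc (0 : ℝ) 1 ∧
    ∀ l ∈ Set.Icc (0 : ℝ) 1, D lamstar ≤ D l := by
  have hcomm : β * Vd * Vc ≤ r ^ 2 := (Real.sqrt_le_left hr.le).1 hcase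
  have hbranch : Vd / (Vd + r) ≤ lamstar := hlam ▸ threshold_le_optimalSplit hVd hVc hr hβ0.le hcomm
  have hbalance : lamstar * L / Vd + β * lamstar * L / r
      = (1 - lamstar) * L / r + (1 - lamstar) * L / Vc :=
    hlam ▸ optimalSplit_balance hVd hVc hr hβ0.le
  have hmono : Monotone fun l : ℝ => l * L / Vd + β * l * L / r := fun x y hxy => by
    dsimp only; gcongr
  have hanti : Antitone fun l : ℝ => (1 - l) * L / r + (1 - l) * L / Vc := fun x y hxy => by
    dsimp only; gcongr
  have hmin : IsMinOn D univ lamstar := isMinOn_of_monotone_of_antitone_of_eq hmono hanti hbalance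
    (by rw [hD, if_pos hbranch, hbalance, max_self])
    (fun l _ => by
      rw [hD]
      split_ifs
      · exact le_max_right _ _
      · exact add_le_add le_rfl (le_max_right _ _))
    (fun l (hl : lamstar < l) => by rw [hD, if_pos (hbranch.trans hl.le)]; exact le_max_left _ _)
  exact ⟨hlam ▸ optimalSplit_mem_Icc hVd hVc hr hβ0.le, fun l _ => hmin (mem_univ l)⟩

theorem optimal_segmentation_comm_dominant
    (L Vd Vc r β : ℝ)
    (hL : 0 < L) (hVd : 0 < Vd) (hVc : 0 < Vc) (hr : 0 < r)
    (hβ0 : 0 < β) (hβ1 : β < 1)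
    (D : ℝ → ℝ)
    (hD : ∀ lam : ℝ, D lam =
      if Vd / (Vd + r) ≤ lam then
        max (lam * L / Vd + β * lam * L / r)
            ((1 - lam) * L / r + (1 - lam) * L / Vc)
      else
        (1 - lam) * L / r + max (β * lam * L / r) ((1 - lam) * L / Vc))
    (hcase : Real.sqrt (β * Vd * Vc) ≤ r)
    (lamstar : ℝ)
    (hlam : lamstar = Vd * (r + Vc) / (Vd * Vc * (1 + β) + r * (Vd + Vc))) :
    lamstar ∈ Set.Icc (0 : ℝ) 1 ∧
    ∀ l ∈ Set.Icc (0 : ℝ) 1, D lamstar ≤ D l :=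
  optimal_segmentation_comm_dominant_general L Vd Vc r β hL hVd hVc hr hβ0 D hD hcase lamstar hlam
end

section
/- Fix positive reals $L, V^d, V^c, r$ and $\beta \in (0,1)$, and define $D(\lambda)$ piecewise as: $D(\lambda) = \max\{\lambda L/V^d + \beta\lambda L/r,\ (1-\lambda)L/r + (1-\lambda)L/V^c\}$ if $\lambda \ge V^d/(V^d + r)$, and $D(\lambda) = (1-\lambda)L/r + \max\{\beta\lambda L/r,\ (1-\lambda)L/V^c\}$ if $\lambda < V^d/(V^d + r)$. If $r < \sqrt{\beta V^d V^c}$, then $D$ attains its minimum over $[0,1]$ at $\lambda^* = V^d/(V^d + r)$. -/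
theorem optimal_segmentation_comp_dominant
    (L Vd Vc r β : ℝ)
    (hL : 0 < L) (hVd : 0 < Vd) (hVc : 0 < Vc) (hr : 0 < r)
    (hβ0 : 0 < β) (hβ1 : β < 1)
    (D : ℝ → ℝ)
    (hD : ∀ lam : ℝ, D lam =
      if Vd / (Vd + r) ≤ lam then
        max (lam * L / Vd + β * lam * L / r)
            ((1 - lam) * L / r + (1 - lam) * L / Vc)
      else
        (1 - lam) * L / r + max (β * lam * L / r) ((1 - lam) * L / Vc))
    (hcase : r < Real.sqrt (β * Vd * Vc))
    (lamstar : ℝ)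
    (hlam : lamstar = Vd / (Vd + r)) :
    lamstar ∈ Set.Icc (0 : ℝ) 1 ∧
    ∀ l ∈ Set.Icc (0 : ℝ) 1, D lamstar ≤ D l := by
  have hVdr : 0 < Vd + r := by linarith
  have hr2 : r ^ 2 < β * Vd * Vc := by
    have := (Real.lt_sqrt hr.le).mp hcase
    linarith
  have hl0 : 0 ≤ lamstar := by
    rw [hlam]; positivity
  have hl1 : lamstar ≤ 1 := by
    rw [hlam, div_le_one hVdr]; linarith
  have hDs : D lamstar = max (lamstar * L / Vd + β * lamstar * L / r)
      ((1 - lamstar) * L / r + (1 - lamstar) * L / Vc) := by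
    rw [hD, if_pos (le_of_eq hlam.symm)]
  -- closed forms
  have hA : lamstar * L / Vd + β * lamstar * L / r = L * (r + β * Vd) / (r * (Vd + r)) := by
    rw [hlam]; field_simp
  have hB : (1 - lamstar) * L / r + (1 - lamstar) * L / Vc
      = L * (Vc + r) / (Vc * (Vd + r)) := by
    rw [hlam]; field_simp; ring
  -- B ≤ A
  have hBA : (1 - lamstar) * L / r + (1 - lamstar) * L / Vc
      ≤ lamstar * L / Vd + β * lamstar * L / r := by
    rw [hA, hB, div_le_div_iff₀ (by positivity) (by positivity)]
    nlinarith [mul_pos hL hVdr, mul_pos hVc hr]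
  have hDsA : D lamstar = lamstar * L / Vd + β * lamstar * L / r := by
    rw [hDs, max_eq_left hBA]
  constructor
  · exact ⟨hl0, hl1⟩
  · intro l hl
    obtain ⟨hl0', hl1'⟩ := hl
    rw [hD l]
    split_ifs with h
    · -- l ≥ lamstar : first max arg is increasing
      have hmono : lamstar * L / Vd + β * lamstar * L / r
          ≤ l * L / Vd + β * l * L / r := by
        have hll : lamstar ≤ l := hlam ▸ h
        have h1 : lamstar * L / Vd ≤ l * L / Vd := by
          apply div_le_div_of_nonneg_right ?_ hVd.le
          nlinarith
        have h2 : β * lamstar * L / r ≤ β * l * L / r := by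
          apply div_le_div_of_nonneg_right ?_ hr.le
          nlinarith [mul_nonneg hβ0.le hL.le]
        linarith
      rw [hDsA]
      exact le_trans hmono (le_max_left _ _)
    · -- l < lamstar
      push_neg at h
      have hlVd : l * (Vd + r) ≤ Vd := by
        have := (lt_div_iff₀ hVdr).mp h
        linarith
      have key : lamstar * L / Vd + β * lamstar * L / r
          ≤ (1 - l) * L / r + β * l * L / r := by
        rw [hA]
        have hrhs : (1 - l) * L / r + β * l * L / r = L * (1 - (1 - β) * l) / r := by
          field_simp; ring
        rw [hrhs, div_le_div_iff₀ (by positivity) hr]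
        nlinarith [mul_pos hL hr, mul_nonneg (mul_nonneg hL.le (by linarith : (0:ℝ) ≤ 1 - β)) (sub_nonneg.mpr hlVd)]
      rw [hDsA]
      exact le_trans key (by gcongr; exact le_max_left _ _)
end

section
/- Fix positive reals $L, V^d, V^c$ and $\beta \in (0,1)$. Define $\hat{D}_1(r, V^c) = \frac{L}{r} \cdot \frac{(r + V^c)(r + \beta V^d)}{V^d V^c(1+\beta) + r(V^d + V^c)}$ and $\hat{D}_2(r) = \frac{L}{r} \cdot \frac{r + \beta V^d}{V^d + r}$. Then $\hat{D}_1(r, V^c) \ge \hat{D}_2(r)$ if and only if $r^2 \ge \beta V^d V^c$, with equality if and only if $r^2 = \beta V^d V^c$. Moreover $\hat{D}_1 - \hat{D}_2 = \frac{L}{r} \cdot \frac{(r + \beta V^d)(r^2 - \beta V^d V^c)}{(V^d V^c(1+\beta) + r(V^d + V^c))(r + V^d)}$. -/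
theorem D1_ge_D2_iff
    (L Vd Vc r β : ℝ)
    (hL : 0 < L) (hVd : 0 < Vd) (hVc : 0 < Vc) (hr : 0 < r)
    (hβ0 : 0 < β) (hβ1 : β < 1)
    (D1 D2 : ℝ)
    (hD1 : D1 = L / r * ((r + Vc) * (r + β * Vd) /
      (Vd * Vc * (1 + β) + r * (Vd + Vc))))
    (hD2 : D2 = L / r * ((r + β * Vd) / (Vd + r))) :
    (D2 ≤ D1 ↔ β * Vd * Vc ≤ r ^ 2) ∧
    (D1 = D2 ↔ r ^ 2 = β * Vd * Vc) ∧
    D1 - D2 = L / r * ((r + β * Vd) * (r ^ 2 - β * Vd * Vc) /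
      ((Vd * Vc * (1 + β) + r * (Vd + Vc)) * (r + Vd))) := by
  have hden : 0 < Vd * Vc * (1 + β) + r * (Vd + Vc) := by positivity
  have hrVd : 0 < r + Vd := by positivity
  have hVdr : 0 < Vd + r := by positivity
  have hdiff : D1 - D2 = L / r * ((r + β * Vd) * (r ^ 2 - β * Vd * Vc) /
      ((Vd * Vc * (1 + β) + r * (Vd + Vc)) * (r + Vd))) := by
    subst hD1 hD2
    field_simp
    ring
  have hc : 0 < L / r * ((r + β * Vd) /
      ((Vd * Vc * (1 + β) + r * (Vd + Vc)) * (r + Vd))) := by positivity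
  have key : D1 - D2 = (L / r * ((r + β * Vd) /
      ((Vd * Vc * (1 + β) + r * (Vd + Vc)) * (r + Vd)))) * (r ^ 2 - β * Vd * Vc) := by
    rw [hdiff]; ring
  refine ⟨?_, ?_, hdiff⟩
  · constructor
    · intro h
      have h' : 0 ≤ D1 - D2 := by linarith
      rw [key] at h'
      have hx : 0 ≤ r ^ 2 - β * Vd * Vc := nonneg_of_mul_nonneg_left (by linarith [h']) hc
      linarith
    · intro h
      have : 0 ≤ D1 - D2 := by
        rw [key]; exact mul_nonneg hc.le (by linarith)
      linarith
  · constructor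
    · intro h
      have h' : D1 - D2 = 0 := by linarith
      rw [key] at h'
      rcases mul_eq_zero.mp h' with h0 | h0
      · exact absurd h0 (ne_of_gt hc)
      · linarith
    · intro h
      have : D1 - D2 = 0 := by rw [key, h]; ring
      linarith
end

section
/- Fix positive constants $L, V^d, \beta$. The function $\hat{D}_1(r, V) = \frac{L}{r} \cdot \frac{(r + V)(r + \beta V^d)}{V^d V(1+\beta) + r(V^d + V)}$ is jointly strictly convex in $(r, V)$ on $(0,\infty)^2$. -/
/-!
Clearing denominators gives `L / D̂₁ = V^d r / (r + β V^d) + r V / (r + V)`: the throughput of two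
parallel pipelines, each made of two stages in series. The second summand is concave on the
quadrant (it is linear along rays) and strictly concave in `V` for fixed `r`; the first is strictly
concave in `r`. Hence the throughput is jointly strictly concave, and `L` divided by a positive
strictly concave function is strictly convex.
-/

open Set

section

variable {𝕜 E F γ : Type*} [Semiring 𝕜] [PartialOrder 𝕜]
  [AddCommMonoid E] [Module 𝕜 E] [AddCommMonoid F] [Module 𝕜 F]
  [AddCommMonoid γ] [PartialOrder γ] [IsOrderedCancelAddMonoid γ] [Module 𝕜 γ]

theorem StrictConcaveOn.fst_add_of_strictConcaveOn_slices {s : Set E} {t : Set F} {φ : E → γ}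
    {G : E × F → γ} (hφ : StrictConcaveOn 𝕜 s φ) (hG : ConcaveOn 𝕜 (s ×ˢ t) G)
    (hslice : ∀ x ∈ s, StrictConcaveOn 𝕜 t fun y => G (x, y)) :
    StrictConcaveOn 𝕜 (s ×ˢ t) fun p => φ p.1 + G p := by
  refine ⟨hG.1, fun x hx y hy hxy a b ha hb hab => ?_⟩
  obtain ⟨x₁, x₂⟩ := x
  obtain ⟨y₁, y₂⟩ := y
  by_cases h₁ : x₁ = y₁
  · subst h₁
    have h₂ : x₂ ≠ y₂ := fun h₂ => hxy (by rw [h₂])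
    have hcomb : a • (x₁, x₂) + b • (x₁, y₂) = (x₁, a • x₂ + b • y₂) := by
      ext
      · exact Convex.combo_self hab x₁
      · rfl
    have hG' := (hslice x₁ hx.1).2 hx.2 hy.2 h₂ ha hb hab
    calc a • (φ x₁ + G (x₁, x₂)) + b • (φ x₁ + G (x₁, y₂))
        = (a • φ x₁ + b • φ x₁) + (a • G (x₁, x₂) + b • G (x₁, y₂)) := by
          rw [smul_add, smul_add, add_add_add_comm]
      _ < φ x₁ + G (x₁, a • x₂ + b • y₂) := by
          rw [Convex.combo_self hab]
          exact (add_lt_add_iff_left _).2 hG'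
      _ = φ (a • (x₁, x₂) + b • (x₁, y₂)).1 + G (a • (x₁, x₂) + b • (x₁, y₂)) := by
          rw [hcomb]
  · calc a • (φ x₁ + G (x₁, x₂)) + b • (φ y₁ + G (y₁, y₂))
        = (a • φ x₁ + b • φ y₁) + (a • G (x₁, x₂) + b • G (y₁, y₂)) := by
          rw [smul_add, smul_add, add_add_add_comm]
      _ < φ (a • x₁ + b • y₁) + G (a • (x₁, x₂) + b • (y₁, y₂)) :=
          add_lt_add_of_lt_of_le (hφ.2 hx.1 hy.1 h₁ ha hb hab) (hG.2 hx hy ha.le hb.le hab)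

end

theorem StrictConcaveOn.const_div {E : Type*} [AddCommMonoid E] [Module ℝ E] {s : Set E}
    {g : E → ℝ} {c : ℝ} (hg : StrictConcaveOn ℝ s g) (hc : 0 < c) (hpos : ∀ x ∈ s, 0 < g x) :
    StrictConvexOn ℝ s fun x => c / g x := by
  refine ⟨hg.1, fun x hx y hy hxy a b ha hb hab => ?_⟩
  have hgx := hpos x hx
  have hgy := hpos y hy
  have hinv := (convexOn_zpow (𝕜 := ℝ) (-1)).2 (mem_Ioi.2 hgx) (mem_Ioi.2 hgy) ha.le hb.le hab
  simp only [zpow_neg_one, smul_eq_mul] at hinv ⊢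
  calc c / g (a • x + b • y) < c / (a * g x + b * g y) :=
        div_lt_div_of_pos_left hc (by positivity) (hg.2 hx hy hxy ha hb hab)
    _ = c * (a * g x + b * g y)⁻¹ := div_eq_mul_inv _ _
    _ ≤ c * (a * (g x)⁻¹ + b * (g y)⁻¹) := mul_le_mul_of_nonneg_left hinv hc.le
    _ = a * (c / g x) + b * (c / g y) := by ring

theorem strictConcaveOn_mul_div_add {m k : ℝ} (hm : 0 < m) (hk : 0 < k) :
    StrictConcaveOn ℝ (Ioi (-k)) fun x => m * x / (x + k) := by
  refine ⟨convex_Ioi _, fun x hx y hy hxy a b ha hb hab => ?_⟩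
  have hx' : 0 < x + k := by linarith [mem_Ioi.1 hx]
  have hy' : 0 < y + k := by linarith [mem_Ioi.1 hy]
  have hmid : -k < a * x + b * y := convex_Ioi (-k) hx hy ha.le hb.le hab
  have hmid' : 0 < a * x + b * y + k := by linarith
  have hgap : m * (a * x + b * y) / (a * x + b * y + k)
      - (a * (m * x / (x + k)) + b * (m * y / (y + k)))
      = a * b * m * k * (x - y) ^ 2 / ((x + k) * (y + k) * (a * x + b * y + k)) := by
    obtain rfl : b = 1 - a := by linarith
    field_simp
    ring
  have : 0 < a * b * m * k * (x - y) ^ 2 / ((x + k) * (y + k) * (a * x + b * y + k)) := by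
    have := sub_ne_zero.2 hxy
    positivity
  simp only [smul_eq_mul]
  linarith

theorem concaveOn_fst_mul_snd_div_add :
    ConcaveOn ℝ (Ioi 0 ×ˢ Ioi 0) fun p : ℝ × ℝ => p.1 * p.2 / (p.1 + p.2) := by
  refine ⟨(convex_Ioi 0).prod (convex_Ioi 0), ?_⟩
  rintro ⟨x₁, x₂⟩ ⟨hx₁, hx₂⟩ ⟨y₁, y₂⟩ ⟨hy₁, hy₂⟩ a b ha hb hab
  simp only [mem_Ioi, Prod.smul_mk, Prod.mk_add_mk, smul_eq_mul] at *
  have hx : 0 < x₁ + x₂ := by positivity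
  have hy : 0 < y₁ + y₂ := by positivity
  have hmid : 0 < a * (x₁ + x₂) + b * (y₁ + y₂) := convex_Ioi (0 : ℝ) hx hy ha hb hab
  have hgap : (a * x₁ + b * y₁) * (a * x₂ + b * y₂) / (a * x₁ + b * y₁ + (a * x₂ + b * y₂))
      - (a * (x₁ * x₂ / (x₁ + x₂)) + b * (y₁ * y₂ / (y₁ + y₂)))
      = a * b * (x₁ * y₂ - x₂ * y₁) ^ 2
          / ((x₁ + x₂) * (y₁ + y₂) * (a * (x₁ + x₂) + b * (y₁ + y₂))) := by
    rw [show a * x₁ + b * y₁ + (a * x₂ + b * y₂) = a * (x₁ + x₂) + b * (y₁ + y₂) by ring]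
    field_simp
    ring
  have : 0 ≤ a * b * (x₁ * y₂ - x₂ * y₁) ^ 2
      / ((x₁ + x₂) * (y₁ + y₂) * (a * (x₁ + x₂) + b * (y₁ + y₂))) := by
    positivity
  linarith

theorem D1_jointly_strictly_convex_general
    (L Vd β : ℝ)
    (hL : 0 < L) (hVd : 0 < Vd) (hβ0 : 0 < β)
    (D1 : ℝ × ℝ → ℝ)
    (hD1 : ∀ p : ℝ × ℝ, D1 p = L / p.1 * ((p.1 + p.2) * (p.1 + β * Vd) /
      (Vd * p.2 * (1 + β) + p.1 * (Vd + p.2)))) :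
    StrictConvexOn ℝ (Set.Ioi 0 ×ˢ Set.Ioi 0) D1 := by
  have hlocal : StrictConcaveOn ℝ (Ioi 0) fun r => Vd * r / (r + β * Vd) :=
    (strictConcaveOn_mul_div_add hVd (by positivity)).subset
      (Ioi_subset_Ioi (neg_nonpos.2 (by positivity))) (convex_Ioi 0)
  have hcloud (r : ℝ) (hr : r ∈ Ioi 0) :
      StrictConcaveOn ℝ (Ioi 0) fun V => r * V / (r + V) := by
    simp only [add_comm r]
    exact (strictConcaveOn_mul_div_add hr hr).subset
      (Ioi_subset_Ioi (neg_nonpos.2 (le_of_lt hr))) (convex_Ioi 0)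
  have hthroughput :=
    hlocal.fst_add_of_strictConcaveOn_slices concaveOn_fst_mul_snd_div_add hcloud
  refine (hthroughput.const_div hL fun p ⟨hr, hV⟩ => ?_).congr fun p ⟨hr, hV⟩ => ?_
  · simp only [mem_Ioi] at hr hV
    positivity
  · simp only [mem_Ioi] at hr hV
    rw [hD1]
    field_simp
    ring

theorem D1_jointly_strictly_convex
    (L Vd β : ℝ)
    (hL : 0 < L) (hVd : 0 < Vd) (hβ0 : 0 < β) (hβ1 : β < 1)
    (D1 : ℝ × ℝ → ℝ)
    (hD1 : ∀ p : ℝ × ℝ, D1 p = L / p.1 * ((p.1 + p.2) * (p.1 + β * Vd) /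
      (Vd * p.2 * (1 + β) + p.1 * (Vd + p.2)))) :
    StrictConvexOn ℝ (Set.Ioi 0 ×ˢ Set.Ioi 0) D1 :=
  D1_jointly_strictly_convex_general L Vd β hL hVd hβ0 D1 hD1
end

section
/- Fix positive constants $L, V^d$. The function $\bar{D}(r, V) = \frac{L(r + V)}{V^d V + r(V^d + V)}$ is jointly strictly convex in $(r, V)$ on $(0,\infty)^2$, and is strictly decreasing in each of $r$ and $V$. -/
lemma Dbar_eq (L Vd r V : ℝ) (hVd : 0 < Vd) (hr : 0 < r) (hV : 0 < V) :
    L * (r + V) / (Vd * V + r * (Vd + V)) = L / (Vd + r * V / (r + V)) := by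
  have hs : (0:ℝ) < r + V := by linarith
  have hd1 : (0:ℝ) < Vd * V + r * (Vd + V) := by positivity
  have hd2 : (0:ℝ) < Vd + r * V / (r + V) := by positivity
  rw [div_eq_div_iff hd1.ne' hd2.ne']
  field_simp
  ring

set_option maxHeartbeats 1000000 in
lemma main_ineq (L Vd r1 V1 r2 V2 a b : ℝ) (hL : 0 < L) (hVd : 0 < Vd)
    (hr1 : 0 < r1) (hV1 : 0 < V1) (hr2 : 0 < r2) (hV2 : 0 < V2)
    (ha : 0 < a) (hb : 0 < b) (hab : a + b = 1)
    (hne : r1 ≠ r2 ∨ V1 ≠ V2) :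
    L * ((a*r1+b*r2) + (a*V1+b*V2)) /
      (Vd * (a*V1+b*V2) + (a*r1+b*r2) * (Vd + (a*V1+b*V2))) <
    a * (L * (r1+V1) / (Vd*V1 + r1*(Vd+V1))) +
    b * (L * (r2+V2) / (Vd*V2 + r2*(Vd+V2))) := by
  have hb' : b = 1 - a := by linarith
  subst hb'
  set rm := a*r1+(1-a)*r2 with hrm
  set Vm := a*V1+(1-a)*V2 with hVm
  have hrmpos : 0 < rm := by rw [hrm]; nlinarith
  have hVmpos : 0 < Vm := by rw [hVm]; nlinarith
  have hs1 : (0:ℝ) < r1 + V1 := by linarith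
  have hs2 : (0:ℝ) < r2 + V2 := by linarith
  have hsm : (0:ℝ) < rm + Vm := by linarith
  set H1 := r1*V1/(r1+V1) with hH1
  set H2 := r2*V2/(r2+V2) with hH2
  set Hm := rm*Vm/(rm+Vm) with hHm
  have hH1pos : 0 < H1 := by rw [hH1]; positivity
  have hH2pos : 0 < H2 := by rw [hH2]; positivity
  have hHmpos : 0 < Hm := by rw [hHm]; positivity
  set c1 := Vd + H1 with hc1
  set c2 := Vd + H2 with hc2
  set cm := Vd + Hm with hcm
  have hc1p : 0 < c1 := by rw [hc1]; linarith
  have hc2p : 0 < c2 := by rw [hc2]; linarith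
  have hcmp : 0 < cm := by rw [hcm]; linarith
  set cmid := a*c1 + (1-a)*c2 with hcmid
  have hcmidp : 0 < cmid := by rw [hcmid]; nlinarith
  -- rewrite goal
  rw [Dbar_eq L Vd r1 V1 hVd hr1 hV1, Dbar_eq L Vd r2 V2 hVd hr2 hV2,
      Dbar_eq L Vd rm Vm hVd hrmpos hVmpos]
  rw [← hH1, ← hH2, ← hHm, ← hc1, ← hc2, ← hcm]
  -- concavity of H : a*H1+(1-a)*H2 ≤ Hm with explicit remainder
  have hid1 : Hm - (a*H1 + (1-a)*H2)
      = a*(1-a)*(r1*V2 - r2*V1)^2 / ((r1+V1)*(r2+V2)*(rm+Vm)) := by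
    rw [hHm, hH1, hH2, hrm, hVm]
    field_simp
    ring
  -- convexity of reciprocal with explicit remainder
  have hid2 : a*(L/c1) + (1-a)*(L/c2) - L/cmid
      = L * (a*(1-a)*(c1-c2)^2) / (c1*c2*cmid) := by
    rw [hcmid]
    field_simp
    ring
  have hmid_le : cmid ≤ cm := by
    have h0 : 0 ≤ a*(1-a)*(r1*V2 - r2*V1)^2 / ((r1+V1)*(r2+V2)*(rm+Vm)) := by positivity
    rw [hcmid, hcm, hc1, hc2]
    nlinarith [hid1]
  by_cases hcross : r1*V2 = r2*V1
  · -- then H1 ≠ H2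
    have hH12 : H1 ≠ H2 := by
      intro hEq
      have hEq' : r1*V1*(r2+V2) = r2*V2*(r1+V1) := by
        rw [hH1, hH2] at hEq
        field_simp at hEq
        linarith [hEq]
      have hV : V1 = V2 := by
        have h0 : r2*(r1+V1)*(V1-V2) = 0 := by
          linear_combination hEq' - V1 * hcross
        have h1 : r2*(r1+V1) ≠ 0 := by positivity
        have := mul_eq_zero.mp (by linear_combination h0 : r2*(r1+V1)*(V1-V2) = 0)
        rcases this with h | h
        · exact absurd h h1
        · linarith
      have hR : r1 = r2 := by
        have : r1*V2 = r2*V2 := by rw [← hV] at hcross ⊢; linarith [hcross]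
        have := mul_right_cancel₀ hV2.ne' this
        exact this
      rcases hne with h | h
      · exact h hR
      · exact h hV
    have hstrict : L/cmid < a*(L/c1) + (1-a)*(L/c2) := by
      have hpos : 0 < L * (a*(1-a)*(c1-c2)^2) / (c1*c2*cmid) := by
        have : c1 - c2 ≠ 0 := by
          intro h; apply hH12; rw [hc1, hc2] at h; linarith
        positivity
      linarith [hid2]
    have hle : L/cm ≤ L/cmid :=
      div_le_div_of_nonneg_left hL.le hcmidp hmid_le
    linarith
  · -- cross term nonzero: strict concavity
    have hmid_lt : cmid < cm := by
      have hpos : 0 < a*(1-a)*(r1*V2 - r2*V1)^2 / ((r1+V1)*(r2+V2)*(rm+Vm)) := by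
        have : r1*V2 - r2*V1 ≠ 0 := fun h => hcross (by linarith)
        positivity
      rw [hcmid, hcm, hc1, hc2]
      nlinarith [hid1]
    have hlt : L/cm < L/cmid := div_lt_div_of_pos_left hL hcmidp hmid_lt
    have hge : L/cmid ≤ a*(L/c1) + (1-a)*(L/c2) := by
      have : 0 ≤ L * (a*(1-a)*(c1-c2)^2) / (c1*c2*cmid) := by positivity
      linarith [hid2]
    linarith

theorem Dbar_convex_and_decreasing
    (L Vd : ℝ) (hL : 0 < L) (hVd : 0 < Vd)
    (Dbar : ℝ × ℝ → ℝ)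
    (hDbar : ∀ p : ℝ × ℝ, Dbar p =
      L * (p.1 + p.2) / (Vd * p.2 + p.1 * (Vd + p.2))) :
    StrictConvexOn ℝ (Set.Ioi 0 ×ˢ Set.Ioi 0) Dbar ∧
    (∀ V : ℝ, 0 < V → StrictAntiOn (fun r => Dbar (r, V)) (Set.Ioi 0)) ∧
    (∀ r : ℝ, 0 < r → StrictAntiOn (fun V => Dbar (r, V)) (Set.Ioi 0)) := by
  refine ⟨⟨(convex_Ioi 0).prod (convex_Ioi 0), ?_⟩, ?_, ?_⟩
  · rintro ⟨r1, V1⟩ hx ⟨r2, V2⟩ hy hxy a b ha hb hab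
    obtain ⟨hr1, hV1⟩ := hx
    obtain ⟨hr2, hV2⟩ := hy
    simp only [Set.mem_Ioi] at hr1 hV1 hr2 hV2
    have hne : r1 ≠ r2 ∨ V1 ≠ V2 := by
      by_contra h
      push_neg at h
      exact hxy (by rw [h.1, h.2])
    have := main_ineq L Vd r1 V1 r2 V2 a b hL hVd hr1 hV1 hr2 hV2 ha hb hab hne
    simp only [hDbar, Prod.smul_mk, Prod.mk_add_mk, smul_eq_mul]
    exact this
  · intro V hV r1 h1 r2 h2 h12
    simp only [Set.mem_Ioi] at h1 h2
    simp only [hDbar]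
    have hd1 : (0:ℝ) < Vd * V + r1 * (Vd + V) := by positivity
    have hd2 : (0:ℝ) < Vd * V + r2 * (Vd + V) := by positivity
    rw [div_lt_div_iff₀ hd2 hd1]
    nlinarith [sq_nonneg V, mul_pos hL (mul_pos (mul_pos hV hV) (sub_pos.mpr h12))]
  · intro r hr V1 h1 V2 h2 h12
    simp only [Set.mem_Ioi] at h1 h2
    simp only [hDbar]
    have hd1 : (0:ℝ) < Vd * V1 + r * (Vd + V1) := by positivity
    have hd2 : (0:ℝ) < Vd * V2 + r * (Vd + V2) := by positivity
    rw [div_lt_div_iff₀ hd2 hd1]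
    nlinarith [mul_pos hL (mul_pos (mul_pos hr hr) (sub_pos.mpr h12))]
end

section
/- Under the hypotheses of the subgradient bound (convex $F$ with minimizer $x^*$, subgradient norms bounded by $G$, positive step sizes $\phi_n$ with $\sum_{n=0}^\infty \phi_n = \infty$ and $\sum_{n=0}^\infty \phi_n^2 < \infty$), the best function value converges: $\min_{0 \le i \le n} F(x^{(i)}) \to F(x^*)$ as $n \to \infty$. -/
/-!
Expanding `‖x⁽ⁱ⁺¹⁾ - x*‖² = ‖x⁽ⁱ⁾ - x*‖² - 2φᵢ⟪gᵢ, x⁽ⁱ⁾ - x*⟫ + φᵢ²‖gᵢ‖²` and using the subgradient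
inequality `⟪gᵢ, x⁽ⁱ⁾ - x*⟫ ≥ F(x⁽ⁱ⁾) - F(x*)`, the squared distance to `x*` drops by
`2φᵢ (F(x⁽ⁱ⁾) - F(x*))` up to an error `φᵢ²G²`. Telescoping gives
`2 (∑ φᵢ) (min F(x⁽ⁱ⁾) - F(x*)) ≤ ‖x⁽⁰⁾ - x*‖² + G² ∑ φᵢ²`; the right side stays bounded since
`∑ φᵢ² < ∞`, while `∑ φᵢ → ∞`, so the gap of the best value tends to `0`.
-/

open Finset Filter Topology

theorem Finset.sum_mul_inf'_le_sum_mul {ι : Type*} {s : Finset ι} (hs : s.Nonempty)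
    (w f : ι → ℝ) (hw : ∀ i ∈ s, 0 ≤ w i) :
    (∑ i ∈ s, w i) * s.inf' hs f ≤ ∑ i ∈ s, w i * f i := by
  rw [sum_mul]
  exact sum_le_sum fun i hi => mul_le_mul_of_nonneg_left (inf'_le f hi) (hw i hi)

theorem Finset.sum_range_add_le_of_le_sub_add {d a b : ℕ → ℝ}
    (h : ∀ i, d (i + 1) ≤ d i - a i + b i) (m : ℕ) :
    ∑ i ∈ range m, a i + d m ≤ d 0 + ∑ i ∈ range m, b i := by
  induction m with
  | zero => simp
  | succ m ih =>
    rw [sum_range_succ, sum_range_succ]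
    linarith [h m]

theorem tendsto_of_sub_mul_le_of_tendsto_atTop {u S : ℕ → ℝ} {L C : ℝ}
    (hlow : ∀ n, L ≤ u n) (hup : ∀ n, (u n - L) * S n ≤ C) (hS : Tendsto S atTop atTop) :
    Tendsto u atTop (𝓝 L) := by
  have hbound : ∀ᶠ n in atTop, u n ≤ L + C / S n := by
    filter_upwards [hS.eventually_gt_atTop 0] with n hn
    linarith [(le_div_iff₀ hn).mpr (hup n)]
  have hlim : Tendsto (fun n => L + C / S n) atTop (𝓝 L) := by
    simpa using (tendsto_const_nhds.div_atTop hS).const_add L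
  exact tendsto_of_tendsto_of_tendsto_of_le_of_le' tendsto_const_nhds hlim
    (Eventually.of_forall hlow) hbound

section Subgradient

variable {E : Type*} [NormedAddCommGroup E] [InnerProductSpace ℝ E]

theorem norm_sub_sq_le_of_subgradient_step {F : E → ℝ} {x g y : E} {t G : ℝ} (ht : 0 ≤ t)
    (hsub : F x + inner ℝ g (y - x) ≤ F y) (hG : ‖g‖ ≤ G) :
    ‖x - t • g - y‖ ^ 2 ≤ ‖x - y‖ ^ 2 - 2 * t * (F x - F y) + t ^ 2 * G ^ 2 := by
  have hexpand : ‖x - t • g - y‖ ^ 2 =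
      ‖x - y‖ ^ 2 - 2 * t * inner ℝ g (x - y) + t ^ 2 * ‖g‖ ^ 2 := by
    rw [sub_right_comm, norm_sub_sq_real, real_inner_smul_right, real_inner_comm, norm_smul,
      mul_pow, Real.norm_eq_abs, sq_abs]
    ring
  have hgap : F x - F y ≤ inner ℝ g (x - y) := by
    rw [← neg_sub y x, inner_neg_right]
    linarith
  have hnorm : ‖g‖ ^ 2 ≤ G ^ 2 := pow_le_pow_left₀ (norm_nonneg g) hG 2
  rw [hexpand]
  linarith [mul_le_mul_of_nonneg_left hgap ht, mul_le_mul_of_nonneg_left hnorm (sq_nonneg t)]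

theorem subgradient_sum_mul_inf'_sub_le (F : E → ℝ) (xstar : E) (x g : ℕ → E) (φ : ℕ → ℝ)
    (hφ : ∀ i, 0 ≤ φ i) (G : ℝ) (hsub : ∀ i, F (x i) + inner ℝ (g i) (xstar - x i) ≤ F xstar)
    (hG : ∀ i, ‖g i‖ ≤ G) (hiter : ∀ i, x (i + 1) = x i - φ i • g i) (n : ℕ) :
    ((range (n + 1)).inf' nonempty_range_add_one (fun i => F (x i)) - F xstar) *
        (2 * ∑ i ∈ range (n + 1), φ i) ≤
      ‖x 0 - xstar‖ ^ 2 + G ^ 2 * ∑ i ∈ range (n + 1), φ i ^ 2 := by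
  have hstep : ∀ i, ‖x (i + 1) - xstar‖ ^ 2 ≤
      ‖x i - xstar‖ ^ 2 - 2 * φ i * (F (x i) - F xstar) + φ i ^ 2 * G ^ 2 := fun i => by
    rw [hiter]
    exact norm_sub_sq_le_of_subgradient_step (hφ i) (hsub i) (hG i)
  have htele := sum_range_add_le_of_le_sub_add (d := fun i => ‖x i - xstar‖ ^ 2)
    (a := fun i => 2 * φ i * (F (x i) - F xstar)) (b := fun i => φ i ^ 2 * G ^ 2) hstep (n + 1)
  have hmin := sum_mul_inf'_le_sum_mul (nonempty_range_add_one (n := n)) φ (fun i => F (x i))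
    fun i _ => hφ i
  simp only [mul_sub, sum_sub_distrib, ← sum_mul, mul_assoc, ← mul_sum] at htele
  linarith [sq_nonneg ‖x (n + 1) - xstar‖]

end Subgradient

theorem subgradient_method_convergence
    (n' : ℕ)
    (F : EuclideanSpace ℝ (Fin n') → ℝ)
    (xstar : EuclideanSpace ℝ (Fin n'))
    (hmin : ∀ y, F xstar ≤ F y)
    (x g : ℕ → EuclideanSpace ℝ (Fin n'))
    (φ : ℕ → ℝ) (hφ : ∀ i, 0 < φ i)
    (G : ℝ)
    (hsub : ∀ i, ∀ y, F (x i) + inner ℝ (g i) (y - x i) ≤ F y)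
    (hG : ∀ i, ‖g i‖ ≤ G)
    (hiter : ∀ i, x (i + 1) = x i - φ i • g i)
    (hdiv : ¬ Summable φ)
    (hsq : Summable (fun i => φ i ^ 2)) :
    Tendsto (fun n => (Finset.range (n + 1)).inf' (by simp) (fun i => F (x i)))
      atTop (nhds (F xstar)) := by
  have hφ₀ : ∀ i, 0 ≤ φ i := fun i => (hφ i).le
  refine tendsto_of_sub_mul_le_of_tendsto_atTop (S := fun n => 2 * ∑ i ∈ range (n + 1), φ i)
    (C := ‖x 0 - xstar‖ ^ 2 + G ^ 2 * ∑' i, φ i ^ 2)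
    (fun n => le_inf' _ _ fun i _ => hmin (x i)) (fun n => ?_) ?_
  · refine (subgradient_sum_mul_inf'_sub_le F xstar x g φ hφ₀ G (fun i => hsub i xstar) hG
      hiter n).trans ?_
    gcongr
    exact hsq.sum_le_tsum _ fun i _ => sq_nonneg (φ i)
  · have hpartial : Tendsto (fun m => ∑ i ∈ range m, φ i) atTop atTop :=
      (not_summable_iff_tendsto_nat_atTop_of_nonneg hφ₀).mp hdiv
    exact (hpartial.comp (tendsto_add_atTop_nat 1)).const_mul_atTop two_pos
end

section
/- Fix positive reals $L, V^d, V^c$ and $\beta \in (0,1)$, and consider the segmentation strategies $\lambda^{(1)}(r) = V^d/(V^d + r)$ and $\lambda^{(2)}(r) = r/(r + \beta V^c)$ as functions of the communication capacity $r > 0$. Then $\lambda^{(1)}(r) \le \lambda^{(2)}(r)$ if and only if $r \ge \sqrt{\beta V^d V^c}$, and the interior point $\lambda^* = \frac{V^d(r + V^c)}{V^d V^c(1+\beta) + r(V^d + V^c)}$ satisfies $\lambda^{(1)}(r) \le \lambda^* \le \lambda^{(2)}(r)$ whenever $r \ge \sqrt{\beta V^d V^c}$. -/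
theorem segmentation_thresholds_order
    (L Vd Vc β : ℝ)
    (hL : 0 < L) (hVd : 0 < Vd) (hVc : 0 < Vc)
    (hβ0 : 0 < β) (hβ1 : β < 1) :
    ∀ r : ℝ, 0 < r →
      (Vd / (Vd + r) ≤ r / (r + β * Vc) ↔ Real.sqrt (β * Vd * Vc) ≤ r) ∧
      (Real.sqrt (β * Vd * Vc) ≤ r →
        Vd / (Vd + r) ≤
          Vd * (r + Vc) / (Vd * Vc * (1 + β) + r * (Vd + Vc)) ∧
        Vd * (r + Vc) / (Vd * Vc * (1 + β) + r * (Vd + Vc)) ≤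
          r / (r + β * Vc)) := by
  intro r hr
  have hd1 : 0 < Vd + r := by linarith
  have hd2 : 0 < r + β * Vc := by positivity
  have hd3 : 0 < Vd * Vc * (1 + β) + r * (Vd + Vc) := by positivity
  have hnn : 0 ≤ β * Vd * Vc := by positivity
  have hsq : Real.sqrt (β * Vd * Vc) ≤ r ↔ β * Vd * Vc ≤ r ^ 2 := by
    constructor
    · intro h
      nlinarith [Real.sq_sqrt hnn, Real.sqrt_nonneg (β * Vd * Vc)]
    · intro h
      have := Real.sqrt_le_sqrt h
      rwa [Real.sqrt_sq hr.le] at this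
  constructor
  · rw [div_le_div_iff₀ hd1 hd2, hsq]
    constructor <;> intro h <;> nlinarith
  · intro h
    rw [hsq] at h
    constructor
    · rw [div_le_div_iff₀ hd1 hd3]; nlinarith
    · rw [div_le_div_iff₀ hd3 hd2]; nlinarith
end
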